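/- Let ε>0 and for ξ > ε let K = √(ξ²−ε²). Then for every n ≥ 1 and j ≥ 0, the j-th derivative of ξ ↦ (K−ξ)^n on (2ε, ∞) satisfies |d^j/dξ^j (K−ξ)^n| ≤ C_{n,j,ε} ξ^{−(n+j)} for ξ ≥ 2ε. -/

import Mathlib

/-!
With `K = √(ξ² - ε²)`, give the constants weight `0`, `ξ` weight `-1`, and `K⁻¹`, `K - ξ`
weight `1`. On `ξ ≥ 2ε` each generator of weight `w` is `O(ξ^{-w})` (for `K - ξ` because
`K - ξ = -ε²/(K + ξ)`), hence so is every weighted polynomial in them. Since `K' = ξ/K`, the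
derivatives of the generators are `1`, `-ξK⁻³` and `-K⁻¹(K - ξ)`, so differentiation raises the
weight by one: the `j`-th derivative of `(K - ξ)ⁿ` has weight `n + j`.
-/

open Set

namespace SqrtSymbol

noncomputable def K (ε ξ : ℝ) : ℝ := √(ξ ^ 2 - ε ^ 2)

variable {ε ξ : ℝ}

lemma sq_K (h : ε ^ 2 ≤ ξ ^ 2) : K ε ξ ^ 2 = ξ ^ 2 - ε ^ 2 :=
  Real.sq_sqrt (sub_nonneg.2 h)

lemma K_pos (h : ε ^ 2 < ξ ^ 2) : 0 < K ε ξ :=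
  Real.sqrt_pos.2 (sub_pos.2 h)

lemma hasDerivAt_K (h : ε ^ 2 < ξ ^ 2) : HasDerivAt (K ε) (ξ / K ε ξ) ξ := by
  refine (((hasDerivAt_pow 2 ξ).sub_const (ε ^ 2)).sqrt (sub_pos.2 h).ne').congr_deriv ?_
  norm_num [K, mul_div_mul_left]

lemma hasDerivAt_inv_K (h : ε ^ 2 < ξ ^ 2) :
    HasDerivAt (fun ξ => (K ε ξ)⁻¹) (-(ξ * (K ε ξ)⁻¹ ^ 3)) ξ := by
  refine ((hasDerivAt_K h).inv (K_pos h).ne').congr_deriv ?_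
  field_simp

lemma hasDerivAt_K_sub (h : ε ^ 2 < ξ ^ 2) :
    HasDerivAt (fun ξ => K ε ξ - ξ) (-((K ε ξ)⁻¹ * (K ε ξ - ξ))) ξ := by
  refine ((hasDerivAt_K h).sub (hasDerivAt_id ξ)).congr_deriv ?_
  field_simp [(K_pos h).ne']
  ring

lemma half_le_K (hε : 0 ≤ ε) (h : 2 * ε ≤ ξ) : ξ / 2 ≤ K ε ξ :=
  Real.le_sqrt_of_sq_le (by nlinarith)

lemma abs_K_sub_le (hε : 0 < ε) (h : ε ≤ ξ) : |K ε ξ - ξ| ≤ ε ^ 2 / ξ := by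
  have hK : K ε ξ ^ 2 = ξ ^ 2 - ε ^ 2 := sq_K (by nlinarith)
  have hK0 : 0 ≤ K ε ξ := Real.sqrt_nonneg _
  have hKξ : K ε ξ ≤ ξ := by nlinarith
  rw [abs_of_nonpos (by linarith), le_div_iff₀ (by linarith)]
  nlinarith

inductive IsSymbol (ε : ℝ) : ℤ → (ℝ → ℝ) → Prop
  | const (c : ℝ) : IsSymbol ε 0 fun _ => c
  | id : IsSymbol ε (-1) fun ξ => ξ
  | inv_K : IsSymbol ε 1 fun ξ => (K ε ξ)⁻¹
  | K_sub : IsSymbol ε 1 fun ξ => K ε ξ - ξ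
  | add {w : ℤ} {f g : ℝ → ℝ} : IsSymbol ε w f → IsSymbol ε w g → IsSymbol ε w (f + g)
  | mul {v w : ℤ} {f g : ℝ → ℝ} : IsSymbol ε v f → IsSymbol ε w g → IsSymbol ε (v + w) (f * g)

namespace IsSymbol

variable {v w : ℤ} {f : ℝ → ℝ}

lemma of_weight_eq (hf : IsSymbol ε v f) (h : v = w) : IsSymbol ε w f := h ▸ hf

lemma pow (hf : IsSymbol ε w f) (n : ℕ) : IsSymbol ε (n * w) (f ^ n) := by
  induction n with
  | zero => exact (const 1).of_weight_eq (by simp)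
  | succ n ih => exact (ih.mul hf).of_weight_eq (by push_cast; ring)

lemma exists_hasDerivAt (hf : IsSymbol ε w f) :
    ∃ f', IsSymbol ε (w + 1) f' ∧ ∀ ξ ∈ Ioi |ε|, HasDerivAt f (f' ξ) ξ := by
  have sq_lt {ξ : ℝ} (hξ : ξ ∈ Ioi |ε|) : ε ^ 2 < ξ ^ 2 :=
    sq_lt_sq' (abs_lt.1 hξ).1 (abs_lt.1 hξ).2
  induction hf with
  | const c =>
    exact ⟨_, ((const 0).mul inv_K).of_weight_eq (by norm_num),
      fun ξ _ => by simpa using hasDerivAt_const ξ c⟩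
  | id => exact ⟨_, (const 1).of_weight_eq (by norm_num), fun ξ _ => hasDerivAt_id' ξ⟩
  | inv_K =>
    refine ⟨_, ((const (-1)).mul (id.mul (inv_K.mul (inv_K.mul inv_K)))).of_weight_eq
      (by norm_num), fun ξ hξ => (hasDerivAt_inv_K (sq_lt hξ)).congr_deriv ?_⟩
    simp only [Pi.mul_apply]
    ring
  | K_sub =>
    refine ⟨_, ((const (-1)).mul (inv_K.mul K_sub)).of_weight_eq (by norm_num),
      fun ξ hξ => (hasDerivAt_K_sub (sq_lt hξ)).congr_deriv ?_⟩
    simp only [Pi.mul_apply]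
    ring
  | add _ _ ihf ihg =>
    obtain ⟨f', hf', hff'⟩ := ihf
    obtain ⟨g', hg', hgg'⟩ := ihg
    exact ⟨f' + g', hf'.add hg', fun ξ hξ => (hff' ξ hξ).add (hgg' ξ hξ)⟩
  | @mul v w f g hf hg ihf ihg =>
    obtain ⟨f', hf', hff'⟩ := ihf
    obtain ⟨g', hg', hgg'⟩ := ihg
    exact ⟨f' * g + f * g', ((hf'.mul hg).of_weight_eq (by ring)).add
      ((hf.mul hg').of_weight_eq (by ring)), fun ξ hξ => (hff' ξ hξ).mul (hgg' ξ hξ)⟩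

lemma exists_eqOn_iteratedDeriv (hf : IsSymbol ε w f) (j : ℕ) :
    ∃ g, IsSymbol ε (w + j) g ∧ EqOn (iteratedDeriv j f) g (Ioi |ε|) := by
  induction j with
  | zero => exact ⟨f, by simpa using hf, fun ξ _ => by simp⟩
  | succ j ih =>
    obtain ⟨g, hg, hfg⟩ := ih
    obtain ⟨g', hg', hgg'⟩ := hg.exists_hasDerivAt
    refine ⟨g', hg'.of_weight_eq (by push_cast; ring), fun ξ hξ => ?_⟩
    rw [iteratedDeriv_succ, (hfg.eventuallyEq_of_mem (isOpen_Ioi.mem_nhds hξ)).deriv_eq]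
    exact (hgg' ξ hξ).deriv

lemma exists_abs_le (hε : 0 < ε) (hf : IsSymbol ε w f) :
    ∃ C, ∀ ξ, 2 * ε ≤ ξ → |f ξ| ≤ C * ξ ^ (-w) := by
  induction hf with
  | const c => exact ⟨|c|, fun ξ _ => by simp⟩
  | id => exact ⟨1, fun ξ hξ => by simp [abs_of_pos (by linarith : 0 < ξ)]⟩
  | inv_K =>
    refine ⟨2, fun ξ hξ => ?_⟩
    have hK : ξ / 2 ≤ K ε ξ := half_le_K hε.le hξ
    have hξ0 : 0 < ξ / 2 := by linarith
    calc |(K ε ξ)⁻¹| = (K ε ξ)⁻¹ := abs_of_pos (inv_pos.2 (hξ0.trans_le hK))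
      _ ≤ (ξ / 2)⁻¹ := inv_anti₀ hξ0 hK
      _ = 2 * ξ ^ (-1 : ℤ) := by rw [inv_div, zpow_neg_one, div_eq_mul_inv]
  | K_sub =>
    refine ⟨ε ^ 2, fun ξ hξ => ?_⟩
    rw [zpow_neg_one, ← div_eq_mul_inv]
    exact abs_K_sub_le hε (by linarith)
  | add _ _ ihf ihg =>
    obtain ⟨Cf, hCf⟩ := ihf
    obtain ⟨Cg, hCg⟩ := ihg
    refine ⟨Cf + Cg, fun ξ hξ => ?_⟩
    rw [add_mul]
    exact (abs_add_le _ _).trans (add_le_add (hCf ξ hξ) (hCg ξ hξ))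
  | @mul v w f g _ _ ihf ihg =>
    obtain ⟨Cf, hCf⟩ := ihf
    obtain ⟨Cg, hCg⟩ := ihg
    refine ⟨Cf * Cg, fun ξ hξ => ?_⟩
    have hξ0 : ξ ≠ 0 := by linarith
    calc |(f * g) ξ| = |f ξ| * |g ξ| := abs_mul _ _
      _ ≤ Cf * ξ ^ (-v) * (Cg * ξ ^ (-w)) :=
        mul_le_mul (hCf ξ hξ) (hCg ξ hξ) (abs_nonneg _) ((abs_nonneg _).trans (hCf ξ hξ))
      _ = Cf * Cg * ξ ^ (-(v + w)) := by rw [neg_add, zpow_add₀ hξ0]; ring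

end IsSymbol

end SqrtSymbol

theorem stmt_15 (ε : ℝ) (hε : 0 < ε) :
    ∀ (n : ℕ), 1 ≤ n → ∀ (j : ℕ), ∃ C : ℝ,
      ∀ ξ : ℝ, 2 * ε ≤ ξ →
        |iteratedDeriv j (fun ξ : ℝ => (Real.sqrt (ξ ^ 2 - ε ^ 2) - ξ) ^ n) ξ| ≤
          C * ξ ^ (-((n : ℝ) + (j : ℝ))) := by
  intro n _ j
  obtain ⟨g, hg, hderiv⟩ := (SqrtSymbol.IsSymbol.K_sub.pow n).exists_eqOn_iteratedDeriv j
  obtain ⟨C, hC⟩ := hg.exists_abs_le hε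
  refine ⟨C, fun ξ hξ => ?_⟩
  have hξε : ξ ∈ Ioi |ε| := by rw [mem_Ioi, abs_of_pos hε]; linarith
  have hrpow : ξ ^ (-((n : ℝ) + (j : ℝ))) = ξ ^ (-(n * 1 + j : ℤ)) := by
    rw [← Real.rpow_intCast]; push_cast; ring_nf
  rw [hrpow]
  have hbound := hC ξ hξ
  rwa [← hderiv hξε] at hbound
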